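/- Two closed PGA terms denote the same finite or eventually periodic infinite sequence of primitive instructions if and only if they are provably equal from the axioms PGA1–PGA4 (soundness and completeness of PGA with respect to instruction sequence equivalence). -/

import Mathlib

/-- Single-pass instruction sequences: terms of program algebra (PGA) over a set
`I` of primitive instructions, built from instruction constants, concatenation `;`
and repetition `*`. -/
inductive PGA (I : Type) : Type
  | ins : I → PGA I
  | conc : PGA I → PGA I → PGA I
  | rep : PGA I → PGA I

namespace PGA

variable {I : Type}

/-- `pow X n` is `X^n` for `n ≥ 1` (with `pow X 0` defined as `X`, a junk value):
`X^1 = X` and `X^(n+1) = X ; X^n`. -/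
def pow (X : PGA I) : ℕ → PGA I
  | 0 => X
  | 1 => X
  | n + 2 => conc X (pow X (n + 1))

/-- Derivable equality of PGA terms from the axioms PGA1–PGA4 (closed under
equational logic). -/
inductive Eq : PGA I → PGA I → Prop
  | refl (x : PGA I) : Eq x x
  | symm {x y : PGA I} : Eq x y → Eq y x
  | trans {x y z : PGA I} : Eq x y → Eq y z → Eq x z
  | concCongr {x x' y y' : PGA I} : Eq x x' → Eq y y' → Eq (conc x y) (conc x' y')
  | repCongr {x x' : PGA I} : Eq x x' → Eq (rep x) (rep x')
  | pga1 (x y z : PGA I) : Eq (conc (conc x y) z) (conc x (conc y z))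
  | pga2 (x : PGA I) (n : ℕ) (h : 1 ≤ n) : Eq (rep (pow x n)) (rep x)
  | pga3 (x y : PGA I) : Eq (conc (rep x) y) (rep x)
  | pga4 (x y : PGA I) : Eq (rep (conc x y)) (conc x (rep (conc y x)))

/-- The length of the instruction sequence denoted by a PGA term: `some k` if it
is finite of length `k`, `none` if it is infinite. -/
def len? : PGA I → Option ℕ
  | ins _ => some 1
  | conc P Q => (len? P).bind fun k => (len? Q).map fun l => k + l
  | rep _ => none

/-- The finite or eventually periodic infinite sequence of primitive instructions
denoted by a PGA term, as a function giving the instruction at each position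
(`none` beyond the end of a finite sequence).  An instruction constant denotes the
one-element sequence; `P ; Q` denotes the concatenation of the denoted sequences
(and the sequence of `P` if that is infinite); `P*` denotes the infinite
repetition of the (finite prefix of the) sequence denoted by `P`. -/
def sem : PGA I → ℕ → Option I
  | ins a, n => if n = 0 then some a else none
  | conc P Q, n =>
      match len? P with
      | some k => if n < k then sem P n else sem Q (n - k)
      | none => sem P n
  | rep P, n =>
      match len? P with
      | some k => sem P (n % k)
      | none => sem P n

end PGA

/-!
Soundness: the axioms hold in the model of sequences `ℕ → Option I`; PGA4 is the fact that
repeating `x ; y` is `x` followed by repeating the rotation `y ; x`. Since `sem` of a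
concatenation or repetition branches on `len?`, congruence also needs that `len?` is
determined by `sem` (it is the first position where `sem` is `none`).

Completeness: every term is derivably equal to a finite normal form `a₁ ; … ; aₙ` or to a
lasso `u ; v*` with `u`, `v` finite. PGA4 rotates the first instruction of `v` into `u` and
PGA2 replaces `v` by a power of itself, so two lassos can be given prefixes of a common length
and periods of a common length; lassos of the same shape with the same semantics are equal
as terms.
-/

theorem Option.eq_of_forall_exists_le_iff {o o' : Option ℕ}
    (h : ∀ n, (∃ k ∈ o, k ≤ n) ↔ ∃ k ∈ o', k ≤ n) : o = o' := by
  cases o with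
  | none => cases o' with
    | none => rfl
    | some l => simpa using h l
  | some k => cases o' with
    | none => simpa using h k
    | some l =>
      have hkl := (h l).mpr ⟨l, rfl, le_rfl⟩
      have hlk := (h k).mp ⟨k, rfl, le_rfl⟩
      simp only [Option.mem_def, Option.some.injEq, exists_eq_left'] at hkl hlk
      rw [le_antisymm hkl hlk]

namespace PGA

variable {I : Type}

local infix:50 " ≐ " => PGA.Eq

section Sequences

variable {α : Type*}

def seqAppend (k : ℕ) (f g : ℕ → α) : ℕ → α := fun n => if n < k then f n else g (n - k)

def seqCycle (k : ℕ) (f : ℕ → α) : ℕ → α := fun n => f (n % k)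

theorem seqAppend_assoc (k l : ℕ) (f g h : ℕ → α) :
    seqAppend (k + l) (seqAppend k f g) h = seqAppend k f (seqAppend l g h) := by
  funext n
  simp only [seqAppend]
  split_ifs <;> first | rfl | omega | (congr 1; omega)

theorem seqCycle_seqAppend {k l : ℕ} (hkl : 0 < k + l) (f g : ℕ → α) :
    seqCycle (k + l) (seqAppend k f g) = seqAppend k f (seqCycle (l + k) (seqAppend l g f)) := by
  funext n
  simp only [seqCycle, seqAppend]
  by_cases hn : n < k
  · rw [Nat.mod_eq_of_lt (by omega), if_pos hn, if_pos hn]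
  have hmod : n % (k + l) = ((n - k) % (l + k) + k) % (k + l) := by
    rw [Nat.add_comm l k, Nat.mod_add_mod, Nat.sub_add_cancel (by omega)]
  have hj : (n - k) % (l + k) < l + k := Nat.mod_lt _ (by omega)
  rw [hmod, if_neg hn]
  by_cases hjl : (n - k) % (l + k) < l
  · rw [Nat.mod_eq_of_lt (by omega), if_neg (by omega), if_pos hjl, Nat.add_sub_cancel]
  · rw [Nat.mod_eq_sub_mod (by omega), Nat.mod_eq_of_lt (by omega), if_pos (by omega),
      if_neg hjl]
    congr 1; omega

theorem seqCycle_congr {k : ℕ} (hk : 0 < k) {f g : ℕ → α} (h : ∀ n < k, f n = g n) :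
    seqCycle k f = seqCycle k g :=
  funext fun n => h _ (Nat.mod_lt n hk)

theorem seqCycle_mul_seqCycle (c k : ℕ) (f : ℕ → α) :
    seqCycle (c * k) (seqCycle k f) = seqCycle k f :=
  funext fun n => congrArg f (Nat.mod_mod_of_dvd n (Dvd.intro_left c rfl))

theorem eqOn_of_seqAppend_eq {k : ℕ} {f f' g g' : ℕ → α}
    (h : seqAppend k f g = seqAppend k f' g') : (∀ n < k, f n = f' n) ∧ g = g' := by
  refine ⟨fun n hn => by simpa [seqAppend, hn] using congrFun h n, funext fun n => ?_⟩
  simpa [seqAppend] using congrFun h (n + k)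

theorem eqOn_of_seqCycle_eq {k : ℕ} {f f' : ℕ → α} (h : seqCycle k f = seqCycle k f') :
    ∀ n < k, f n = f' n := fun n hn => by
  simpa [seqCycle, Nat.mod_eq_of_lt hn] using congrFun h n

end Sequences

theorem sem_conc_of_len?_eq_some {P : PGA I} {k : ℕ} (h : len? P = some k) (Q : PGA I) :
    sem (conc P Q) = seqAppend k (sem P) (sem Q) := by
  funext n; simp only [sem, h, seqAppend]

theorem sem_conc_of_len?_eq_none {P : PGA I} (h : len? P = none) (Q : PGA I) :
    sem (conc P Q) = sem P := by
  funext n; simp only [sem, h]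

theorem sem_rep_of_len?_eq_some {P : PGA I} {k : ℕ} (h : len? P = some k) :
    sem (rep P) = seqCycle k (sem P) := by
  funext n; simp only [sem, h, seqCycle]

theorem sem_rep_of_len?_eq_none {P : PGA I} (h : len? P = none) : sem (rep P) = sem P := by
  funext n; simp only [sem, h]

theorem len?_conc_of_len?_eq_some {P Q : PGA I} {k l : ℕ} (hP : len? P = some k)
    (hQ : len? Q = some l) : len? (conc P Q) = some (k + l) := by
  simp [len?, hP, hQ]

theorem len?_conc_of_len?_eq_none_right {P Q : PGA I} (hQ : len? Q = none) :
    len? (conc P Q) = none := by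
  cases len? P <;> simp [len?, hQ]

theorem len?_conc_of_len?_eq_none_left {P : PGA I} (hP : len? P = none) (Q : PGA I) :
    len? (conc P Q) = none := by
  simp [len?, hP]

theorem pos_of_len?_eq_some : ∀ {P : PGA I} {k : ℕ}, len? P = some k → 0 < k
  | ins _, k, h => by simp [len?] at h; omega
  | conc P Q, k, h => by
    simp only [len?, Option.bind_eq_some_iff, Option.map_eq_some_iff] at h
    obtain ⟨a, ha, b, -, rfl⟩ := h
    exact Nat.add_pos_left (pos_of_len?_eq_some ha) b
  | rep _, k, h => by simp [len?] at h

theorem sem_eq_none_iff (P : PGA I) (n : ℕ) : sem P n = none ↔ ∃ k ∈ len? P, k ≤ n := by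
  induction P generalizing n with
  | ins a => cases n <;> simp [sem, len?]
  | conc P Q ihP ihQ =>
    cases hP : len? P with
    | none => simp [sem_conc_of_len?_eq_none hP, len?_conc_of_len?_eq_none_left hP, ihP, hP]
    | some k =>
      rw [sem_conc_of_len?_eq_some hP, seqAppend]
      cases hQ : len? Q with
      | none =>
        rw [len?_conc_of_len?_eq_none_right hQ]
        split_ifs <;> simp [*]
      | some l =>
        rw [len?_conc_of_len?_eq_some hP hQ]
        split_ifs <;> simp [*] <;> omega
  | rep P ihP =>
    cases hP : len? P with
    | none => simp [sem_rep_of_len?_eq_none hP, len?, ihP, hP]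
    | some k =>
      simp [sem_rep_of_len?_eq_some hP, seqCycle, ihP, hP, len?,
        Nat.mod_lt n (pos_of_len?_eq_some hP)]

theorem len?_eq_of_sem_eq {P Q : PGA I} (h : sem P = sem Q) : len? P = len? Q :=
  Option.eq_of_forall_exists_le_iff fun n => by rw [← sem_eq_none_iff, ← sem_eq_none_iff, h]

theorem sem_conc_assoc (x y z : PGA I) : sem (conc (conc x y) z) = sem (conc x (conc y z)) := by
  cases hx : len? x with
  | none =>
    rw [sem_conc_of_len?_eq_none (len?_conc_of_len?_eq_none_left hx y),
      sem_conc_of_len?_eq_none hx, sem_conc_of_len?_eq_none hx]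
  | some k =>
    cases hy : len? y with
    | none =>
      rw [sem_conc_of_len?_eq_none (len?_conc_of_len?_eq_none_right hy),
        sem_conc_of_len?_eq_some hx, sem_conc_of_len?_eq_some hx, sem_conc_of_len?_eq_none hy]
    | some l =>
      rw [sem_conc_of_len?_eq_some (len?_conc_of_len?_eq_some hx hy),
        sem_conc_of_len?_eq_some hx, sem_conc_of_len?_eq_some hx, sem_conc_of_len?_eq_some hy,
        seqAppend_assoc]

theorem len?_pow_of_len?_eq_none {x : PGA I} (h : len? x = none) : ∀ n, len? (pow x n) = none
  | 0 | 1 => h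
  | _ + 2 => len?_conc_of_len?_eq_none_left h _

theorem sem_pow_of_len?_eq_none {x : PGA I} (h : len? x = none) : ∀ n, sem (pow x n) = sem x
  | 0 | 1 => rfl
  | _ + 2 => sem_conc_of_len?_eq_none h _

theorem len?_pow {x : PGA I} {k : ℕ} (h : len? x = some k) :
    ∀ n, 0 < n → len? (pow x n) = some (n * k)
  | 1, _ => by rw [one_mul]; exact h
  | n + 2, _ => by
    rw [show pow x (n + 2) = conc x (pow x (n + 1)) from rfl,
      len?_conc_of_len?_eq_some h (len?_pow h (n + 1) n.succ_pos)]
    congr 1; ring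

theorem sem_pow_eq_seqCycle {x : PGA I} {k : ℕ} (h : len? x = some k) :
    ∀ n, 0 < n → ∀ m < n * k, sem (pow x n) m = seqCycle k (sem x) m
  | 1, _, m, hm => by rw [seqCycle, Nat.mod_eq_of_lt (by omega)]; rfl
  | n + 2, _, m, hm => by
    rw [show pow x (n + 2) = conc x (pow x (n + 1)) from rfl, sem_conc_of_len?_eq_some h,
      seqAppend, seqCycle]
    split_ifs with hmk
    · rw [Nat.mod_eq_of_lt hmk]
    · rw [sem_pow_eq_seqCycle h (n + 1) n.succ_pos (m - k) (by rw [add_mul] at hm ⊢; omega),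
        seqCycle, ← Nat.mod_eq_sub_mod (by omega)]

theorem sem_rep_pow (x : PGA I) {n : ℕ} (hn : 0 < n) : sem (rep (pow x n)) = sem (rep x) := by
  cases hx : len? x with
  | none =>
    rw [sem_rep_of_len?_eq_none (len?_pow_of_len?_eq_none hx n), sem_rep_of_len?_eq_none hx,
      sem_pow_of_len?_eq_none hx]
  | some k =>
    have hnk : 0 < n * k := Nat.mul_pos hn (pos_of_len?_eq_some hx)
    rw [sem_rep_of_len?_eq_some (len?_pow hx n hn), sem_rep_of_len?_eq_some hx,
      seqCycle_congr hnk (sem_pow_eq_seqCycle hx n hn), seqCycle_mul_seqCycle]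

theorem sem_conc_rep (x y : PGA I) : sem (conc (rep x) y) = sem (rep x) :=
  sem_conc_of_len?_eq_none rfl y

theorem sem_rep_conc (x y : PGA I) : sem (rep (conc x y)) = sem (conc x (rep (conc y x))) := by
  cases hx : len? x with
  | none =>
    rw [sem_rep_of_len?_eq_none (len?_conc_of_len?_eq_none_left hx y),
      sem_conc_of_len?_eq_none hx, sem_conc_of_len?_eq_none hx]
  | some k =>
    cases hy : len? y with
    | none =>
      rw [sem_rep_of_len?_eq_none (len?_conc_of_len?_eq_none_right hy),
        sem_conc_of_len?_eq_some hx, sem_conc_of_len?_eq_some hx,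
        sem_rep_of_len?_eq_none (len?_conc_of_len?_eq_none_left hy x),
        sem_conc_of_len?_eq_none hy]
    | some l =>
      rw [sem_rep_of_len?_eq_some (len?_conc_of_len?_eq_some hx hy),
        sem_conc_of_len?_eq_some hx, sem_conc_of_len?_eq_some hx,
        sem_rep_of_len?_eq_some (len?_conc_of_len?_eq_some hy hx), sem_conc_of_len?_eq_some hy,
        seqCycle_seqAppend (Nat.add_pos_left (pos_of_len?_eq_some hx) l)]

theorem Eq.sound {P Q : PGA I} (h : P ≐ Q) : sem P = sem Q := by
  induction h with
  | refl => rfl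
  | symm _ ih => exact ih.symm
  | trans _ _ ih₁ ih₂ => exact ih₁.trans ih₂
  | @concCongr x x' y y' _ _ ihx ihy =>
    funext n
    simp only [sem, len?_eq_of_sem_eq ihx, ihx, ihy]
  | @repCongr x x' _ ihx =>
    funext n
    simp only [sem, len?_eq_of_sem_eq ihx, ihx]
  | pga1 x y z => exact sem_conc_assoc x y z
  | pga2 x n hn => exact sem_rep_pow x hn
  | pga3 x y => exact sem_conc_rep x y
  | pga4 x y => exact sem_rep_conc x y

instance : Trans (@PGA.Eq I) (@PGA.Eq I) (@PGA.Eq I) := ⟨Eq.trans⟩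

/-- Denotes the finite sequence `a :: l`; there is no term for the empty sequence. -/
def ofList : I → List I → PGA I
  | a, [] => ins a
  | a, b :: l => conc (ins a) (ofList b l)

/-- Denotes `(a :: l) (b :: m)^ω`. A nonempty prefix costs nothing, since `X* ≐ X ; X*`. -/
def lasso (a : I) (l : List I) (b : I) (m : List I) : PGA I :=
  conc (ofList a l) (rep (ofList b m))

def IsNormal (N : PGA I) : Prop :=
  (∃ a l, N = ofList a l) ∨ ∃ a l b m, N = lasso a l b m

theorem len?_ofList (a : I) (l : List I) : len? (ofList a l) = some (l.length + 1) := by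
  induction l generalizing a with
  | nil => rfl
  | cons b l ih => simp [ofList, len?, ih b, Nat.add_comm]

theorem sem_ofList (a : I) (l : List I) (n : ℕ) : sem (ofList a l) n = (a :: l)[n]? := by
  induction l generalizing a n with
  | nil => cases n <;> simp [ofList, sem]
  | cons b l ih =>
    rw [ofList, sem_conc_of_len?_eq_some rfl, seqAppend]
    cases n with
    | zero => simp [sem]
    | succ n => simp [ih b n]

theorem len?_lasso (a : I) (l : List I) (b : I) (m : List I) : len? (lasso a l b m) = none :=
  len?_conc_of_len?_eq_none_right rfl

theorem sem_lasso (a : I) (l : List I) (b : I) (m : List I) :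
    sem (lasso a l b m) =
      seqAppend (l.length + 1) (sem (ofList a l)) (seqCycle (m.length + 1) (sem (ofList b m))) := by
  rw [lasso, sem_conc_of_len?_eq_some (len?_ofList a l), sem_rep_of_len?_eq_some (len?_ofList b m)]

theorem ofList_eq_of_eqOn {a a' : I} {l l' : List I} (hl : l.length = l'.length)
    (h : ∀ n < l.length + 1, sem (ofList a l) n = sem (ofList a' l') n) :
    ofList a l = ofList a' l' := by
  have : a :: l = a' :: l' := List.ext_getElem? fun n => by
    by_cases hn : n < l.length + 1
    · simpa only [sem_ofList] using h n hn
    · rw [List.getElem?_eq_none (by simp; omega), List.getElem?_eq_none (by simp; omega)]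
  cases this; rfl

theorem ofList_append (a : I) (l : List I) (b : I) (m : List I) :
    conc (ofList a l) (ofList b m) ≐ ofList a (l ++ b :: m) := by
  induction l generalizing a with
  | nil => exact .refl _
  | cons c l ih => exact (Eq.pga1 _ _ _).trans (.concCongr (.refl _) (ih c))

theorem exists_pow_ofList_eq (b : I) (m : List I) :
    ∀ c, ∃ m', pow (ofList b m) (c + 1) ≐ ofList b m' ∧
      m'.length + 1 = (c + 1) * (m.length + 1)
  | 0 => ⟨m, .refl _, by ring⟩
  | c + 1 => by
    obtain ⟨m', hm', hlen⟩ := exists_pow_ofList_eq b m c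
    refine ⟨m ++ b :: m', (Eq.concCongr (.refl _) hm').trans (ofList_append b m b m'), ?_⟩
    simp only [List.length_append, List.length_cons]
    linear_combination hlen

theorem exists_rep_ofList_eq_mul_length (b : I) (m : List I) (c : ℕ) :
    ∃ m', rep (ofList b m) ≐ rep (ofList b m') ∧
      m'.length + 1 = (c + 1) * (m.length + 1) := by
  obtain ⟨m', hm', hlen⟩ := exists_pow_ofList_eq b m c
  exact ⟨m', (Eq.pga2 _ _ c.succ_pos).symm.trans (.repCongr hm'), hlen⟩

theorem rep_unfold (X : PGA I) : rep X ≐ conc X (rep X) :=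
  calc rep X ≐ rep (conc X X) := (Eq.pga2 X 2 (by omega)).symm
    _ ≐ conc X (rep (conc X X)) := Eq.pga4 X X
    _ ≐ conc X (rep X) := .concCongr (.refl X) (Eq.pga2 X 2 (by omega))

theorem rep_rep (X : PGA I) : rep (rep X) ≐ rep X :=
  (rep_unfold (rep X)).trans (Eq.pga3 X _)

theorem rep_ofList_rotate {b c : I} {m p : List I} (h : c :: p = m ++ [b]) :
    rep (ofList b m) ≐ conc (ins b) (rep (ofList c p)) := by
  cases m with
  | nil =>
    obtain ⟨rfl, rfl⟩ := List.cons_eq_cons.mp h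
    exact rep_unfold _
  | cons d m =>
    obtain ⟨rfl, rfl⟩ := List.cons_eq_cons.mp h
    exact (Eq.pga4 (ins b) (ofList c m)).trans
      (.concCongr (.refl _) (.repCongr (ofList_append c m b [])))

theorem lasso_rotate (a : I) (l : List I) {b c : I} {m p : List I} (h : c :: p = m ++ [b]) :
    lasso a l b m ≐ lasso a (l ++ [b]) c p :=
  calc lasso a l b m ≐ conc (ofList a l) (conc (ins b) (rep (ofList c p))) :=
        .concCongr (.refl _) (rep_ofList_rotate h)
    _ ≐ conc (conc (ofList a l) (ins b)) (rep (ofList c p)) := (Eq.pga1 _ _ _).symm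
    _ ≐ lasso a (l ++ [b]) c p := .concCongr (ofList_append a l b []) (.refl _)

theorem exists_lasso_eq_prefix_length (a : I) (k : ℕ) :
    ∀ (l : List I) (b : I) (m : List I), ∃ l' b' m', lasso a l b m ≐ lasso a l' b' m' ∧
      l'.length = l.length + k ∧ m'.length = m.length := by
  induction k with
  | zero => exact fun l b m => ⟨l, b, m, .refl _, rfl, rfl⟩
  | succ k ih =>
    intro l b m
    obtain ⟨c, p, hcp⟩ := List.exists_cons_of_ne_nil (List.concat_ne_nil b m)
    obtain ⟨l', b', m', h, hl, hm⟩ := ih (l ++ [b]) c p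
    refine ⟨l', b', m', (lasso_rotate a l hcp.symm).trans h, ?_, ?_⟩
    · simp only [hl, List.length_append, List.length_singleton]; ring
    · simpa [hm] using (congrArg List.length hcp).symm

theorem lasso_align (a : I) (l : List I) (b : I) (m : List I) {N : ℕ} (hN : l.length ≤ N)
    (c : ℕ) : ∃ l' b' m', lasso a l b m ≐ lasso a l' b' m' ∧
      l'.length = N ∧ m'.length + 1 = (c + 1) * (m.length + 1) := by
  obtain ⟨m₁, hm₁, hlen₁⟩ := exists_rep_ofList_eq_mul_length b m c
  obtain ⟨l', b', m', h, hl, hm⟩ := exists_lasso_eq_prefix_length a (N - l.length) l b m₁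
  exact ⟨l', b', m', (Eq.concCongr (.refl _) hm₁).trans h, by omega, hm ▸ hlen₁⟩

theorem lasso_eq_of_sem_eq {a a' b b' : I} {l l' m m' : List I} (hl : l.length = l'.length)
    (hm : m.length = m'.length) (h : sem (lasso a l b m) = sem (lasso a' l' b' m')) :
    lasso a l b m = lasso a' l' b' m' := by
  rw [sem_lasso, sem_lasso, ← hl, ← hm] at h
  obtain ⟨hpre, hcyc⟩ := eqOn_of_seqAppend_eq h
  rw [lasso, lasso, ofList_eq_of_eqOn hl hpre, ofList_eq_of_eqOn hm (eqOn_of_seqCycle_eq hcyc)]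

theorem lasso_complete {a a' b b' : I} {l l' m m' : List I}
    (h : sem (lasso a l b m) = sem (lasso a' l' b' m')) : lasso a l b m ≐ lasso a' l' b' m' := by
  obtain ⟨l₁, b₁, m₁, h₁, hl₁, hm₁⟩ :=
    lasso_align a l b m (le_max_left l.length l'.length) m'.length
  obtain ⟨l₂, b₂, m₂, h₂, hl₂, hm₂⟩ :=
    lasso_align a' l' b' m' (le_max_right l.length l'.length) m.length
  have hm : m₁.length = m₂.length := by
    rw [Nat.mul_comm] at hm₂
    omega
  have heq := lasso_eq_of_sem_eq (hl₁.trans hl₂.symm) hm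
    (h₁.sound.symm.trans (h.trans h₂.sound))
  exact h₁.trans (heq ▸ h₂.symm)

theorem IsNormal.complete {N N' : PGA I} (hN : IsNormal N) (hN' : IsNormal N')
    (h : sem N = sem N') : N ≐ N' := by
  have hlen := len?_eq_of_sem_eq h
  rcases hN with ⟨a, l, rfl⟩ | ⟨a, l, b, m, rfl⟩ <;>
    rcases hN' with ⟨a', l', rfl⟩ | ⟨a', l', b', m', rfl⟩
  · rw [len?_ofList, len?_ofList, Option.some_inj, Nat.add_right_cancel_iff] at hlen
    rw [ofList_eq_of_eqOn hlen fun n _ => congrFun h n]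
    exact .refl _
  · simp [len?_ofList, len?_lasso] at hlen
  · simp [len?_ofList, len?_lasso] at hlen
  · exact lasso_complete h

theorem exists_isNormal_eq (P : PGA I) : ∃ N, IsNormal N ∧ P ≐ N := by
  induction P with
  | ins a => exact ⟨ofList a [], .inl ⟨a, [], rfl⟩, .refl _⟩
  | conc P Q ihP ihQ =>
    obtain ⟨_, ⟨a, l, rfl⟩ | ⟨a, l, b, m, rfl⟩, hP⟩ := ihP
    · obtain ⟨_, ⟨c, p, rfl⟩ | ⟨c, p, d, q, rfl⟩, hQ⟩ := ihQ
      · exact ⟨_, .inl ⟨a, l ++ c :: p, rfl⟩,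
          (Eq.concCongr hP hQ).trans (ofList_append a l c p)⟩
      · refine ⟨_, .inr ⟨a, l ++ c :: p, d, q, rfl⟩, (Eq.concCongr hP hQ).trans ?_⟩
        exact (Eq.pga1 _ _ _).symm.trans (.concCongr (ofList_append a l c p) (.refl _))
    · refine ⟨_, .inr ⟨a, l, b, m, rfl⟩, (Eq.concCongr hP (.refl Q)).trans ?_⟩
      exact (Eq.pga1 _ _ _).trans (.concCongr (.refl _) (Eq.pga3 _ _))
  | rep P ihP =>
    obtain ⟨_, ⟨a, l, rfl⟩ | ⟨a, l, b, m, rfl⟩, hP⟩ := ihP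
    · exact ⟨_, .inr ⟨a, l, a, l, rfl⟩, (Eq.repCongr hP).trans (rep_unfold _)⟩
    · refine ⟨_, .inr ⟨a, l, b, m, rfl⟩, (Eq.repCongr hP).trans ?_⟩
      calc rep (lasso a l b m)
          ≐ conc (ofList a l) (rep (conc (rep (ofList b m)) (ofList a l))) := Eq.pga4 _ _
        _ ≐ lasso a l b m := .concCongr (.refl _) ((Eq.repCongr (Eq.pga3 _ _)).trans (rep_rep _))

end PGA

/-- Soundness and completeness of PGA with respect to instruction sequence
equivalence: two closed PGA terms denote the same finite or eventually periodic
infinite sequence of primitive instructions iff they are provably equal from the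
axioms PGA1–PGA4. -/
theorem pga_sound_complete {I : Type} (P Q : PGA I) :
    PGA.sem P = PGA.sem Q ↔ PGA.Eq P Q := by
  refine ⟨fun h => ?_, PGA.Eq.sound⟩
  obtain ⟨N, hN, hP⟩ := PGA.exists_isNormal_eq P
  obtain ⟨N', hN', hQ⟩ := PGA.exists_isNormal_eq Q
  have hsem : PGA.sem N = PGA.sem N' := hP.sound.symm.trans (h.trans hQ.sound)
  exact hP.trans ((hN.complete hN' hsem).trans hQ.symm)
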